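/- arXiv:2512.20058 — 3 statements merged into one kernel-verified Lean document; each statement's English description precedes it below -/
import Mathlib

section
/- Let Q_U be an N × k_U complex matrix and Q_V an N × k_V complex matrix, each with orthonormal columns, with k_V ≤ k_U ≤ N. Then ‖Q_V* Q_U‖_F² = k_V if and only if the column span of Q_V is contained in the column span of Q_U; equivalently, the subspace loss L₁(Q_U, Q_V) = k_V − ‖Q_V* Q_U‖_F² vanishes if and only if span(Q_V) ⊆ span(Q_U). -/
open Matrix

/-- The Frobenius norm of a complex matrix: `‖A‖_F = (Σ_{i,j} |A_{ij}|²)^{1/2}`. -/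
noncomputable def frobNorm {m n : Type*} [Fintype m] [Fintype n] (A : Matrix m n ℂ) : ℝ :=
  Real.sqrt (∑ i, ∑ j, ‖A i j‖ ^ 2)

/-!
Write `v₁, …, v_{k_V}` for the columns of `Q_V`. Row `i` of `Q_Vᴴ Q_U` is the conjugate of
`Q_Uᴴ vᵢ`, so `‖Q_Vᴴ Q_U‖_F² = Σᵢ ‖Q_Uᴴ vᵢ‖²`. Since `Q_U` has orthonormal columns,
`‖vᵢ‖² = ‖Q_Uᴴ vᵢ‖² + ‖vᵢ - Q_U Q_Uᴴ vᵢ‖²`, so each term is at most `‖vᵢ‖² = 1`, with equality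
exactly when `vᵢ = Q_U Q_Uᴴ vᵢ` lies in the column span of `Q_U`. Hence the sum reaches `k_V`
iff every column of `Q_V` lies in that span.
-/

namespace Matrix

variable {m n k : Type*} [Fintype n]

theorem star_dotProduct_self_eq_sum_norm_sq (x : n → ℂ) :
    star x ⬝ᵥ x = ((∑ i, ‖x i‖ ^ 2 : ℝ) : ℂ) := by
  rw [Complex.ofReal_sum]
  refine Finset.sum_congr rfl fun i _ => ?_
  rw [Pi.star_apply, RCLike.star_def, Complex.conj_mul', Complex.ofReal_pow]

theorem sum_norm_sq_eq_zero_iff {x : n → ℂ} : ∑ i, ‖x i‖ ^ 2 = 0 ↔ x = 0 := by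
  simp [Finset.sum_eq_zero_iff_of_nonneg, funext_iff]

theorem sum_norm_sq_transpose_eq_one [DecidableEq k] {Q : Matrix n k ℂ} (hQ : Qᴴ * Q = 1)
    (j : k) : ∑ i, ‖Qᵀ j i‖ ^ 2 = 1 := by
  have h : star (Qᵀ j) ⬝ᵥ Qᵀ j = (Qᴴ * Q) j j := rfl
  rw [hQ, one_apply_eq, star_dotProduct_self_eq_sum_norm_sq] at h
  exact_mod_cast h

theorem conjTranspose_mul_apply_eq_star (P : Matrix n m ℂ) (Q : Matrix n k ℂ) (i : m) (j : k) :
    (Pᴴ * Q) i j = star ((Qᴴ *ᵥ Pᵀ i) j) := by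
  rw [← Pi.star_apply, star_mulVec, conjTranspose_conjTranspose]
  rfl

variable [Fintype k] [DecidableEq k] {Q : Matrix n k ℂ}

/-- Pythagoras for the orthogonal splitting `v = Q Qᴴ v + (v - Q Qᴴ v)`. -/
theorem sum_norm_sq_eq_conjTranspose_mulVec_add_residual (hQ : Qᴴ * Q = 1) (v : n → ℂ) :
    ∑ i, ‖v i‖ ^ 2 = ∑ j, ‖(Qᴴ *ᵥ v) j‖ ^ 2 + ∑ i, ‖(v - Q *ᵥ (Qᴴ *ᵥ v)) i‖ ^ 2 := by
  set w := Qᴴ *ᵥ v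
  have hvw : star v ⬝ᵥ (Q *ᵥ w) = star w ⬝ᵥ w := by
    rw [dotProduct_mulVec, ← conjTranspose_conjTranspose Q, ← star_mulVec]
  have hwv : star (Q *ᵥ w) ⬝ᵥ v = star w ⬝ᵥ w := by
    rw [star_mulVec, ← dotProduct_mulVec]
  have hww : star (Q *ᵥ w) ⬝ᵥ (Q *ᵥ w) = star w ⬝ᵥ w := by
    rw [star_mulVec, dotProduct_mulVec, vecMul_vecMul, hQ, vecMul_one]
  have h : star v ⬝ᵥ v = star w ⬝ᵥ w + star (v - Q *ᵥ w) ⬝ᵥ (v - Q *ᵥ w) := by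
    rw [star_sub, sub_dotProduct, dotProduct_sub, dotProduct_sub, hvw, hwv, hww]
    ring
  simp only [star_dotProduct_self_eq_sum_norm_sq] at h
  exact_mod_cast h

theorem mem_span_range_transpose_iff (hQ : Qᴴ * Q = 1) (v : n → ℂ) :
    v ∈ Submodule.span ℂ (Set.range Qᵀ) ↔ Q *ᵥ (Qᴴ *ᵥ v) = v := by
  refine ⟨fun hv => ?_, fun hv => ?_⟩
  · obtain ⟨u, rfl⟩ : v ∈ LinearMap.range Q.mulVecLin := by rwa [range_mulVecLin]
    rw [mulVecLin_apply, mulVec_mulVec (M := Qᴴ), hQ, one_mulVec]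
  · rw [← hv]
    exact (range_mulVecLin Q).le ⟨_, rfl⟩

theorem sum_norm_sq_conjTranspose_mulVec_le (hQ : Qᴴ * Q = 1) (v : n → ℂ) :
    ∑ j, ‖(Qᴴ *ᵥ v) j‖ ^ 2 ≤ ∑ i, ‖v i‖ ^ 2 := by
  rw [sum_norm_sq_eq_conjTranspose_mulVec_add_residual hQ v]
  exact le_add_of_nonneg_right (by positivity)

theorem sum_norm_sq_conjTranspose_mulVec_eq_iff (hQ : Qᴴ * Q = 1) (v : n → ℂ) :
    ∑ j, ‖(Qᴴ *ᵥ v) j‖ ^ 2 = ∑ i, ‖v i‖ ^ 2 ↔ v ∈ Submodule.span ℂ (Set.range Qᵀ) := by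
  rw [sum_norm_sq_eq_conjTranspose_mulVec_add_residual hQ v, left_eq_add,
    sum_norm_sq_eq_zero_iff, sub_eq_zero, eq_comm, mem_span_range_transpose_iff hQ]

theorem sum_sum_norm_sq_conjTranspose_mulVec_eq_iff {ι : Type*} [Fintype ι] (hQ : Qᴴ * Q = 1)
    (v : ι → n → ℂ) :
    ∑ i, ∑ j, ‖(Qᴴ *ᵥ v i) j‖ ^ 2 = ∑ i, ∑ l, ‖v i l‖ ^ 2 ↔
      ∀ i, v i ∈ Submodule.span ℂ (Set.range Qᵀ) := by
  rw [Finset.sum_eq_sum_iff_of_le fun i _ => sum_norm_sq_conjTranspose_mulVec_le hQ (v i)]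
  simp only [Finset.mem_univ, true_implies, sum_norm_sq_conjTranspose_mulVec_eq_iff hQ]

end Matrix

theorem frobNorm_sq {m n : Type*} [Fintype m] [Fintype n] (A : Matrix m n ℂ) :
    frobNorm A ^ 2 = ∑ i, ∑ j, ‖A i j‖ ^ 2 :=
  Real.sq_sqrt (by positivity)

theorem frobNorm_conjTranspose_mul_sq {m n k : Type*} [Fintype m] [Fintype n] [Fintype k]
    (P : Matrix n m ℂ) (Q : Matrix n k ℂ) :
    frobNorm (Pᴴ * Q) ^ 2 = ∑ i, ∑ j, ‖(Qᴴ *ᵥ Pᵀ i) j‖ ^ 2 := by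
  rw [frobNorm_sq]
  simp_rw [conjTranspose_mul_apply_eq_star, norm_star]

theorem subspace_loss_eq_zero_iff_span_le_general (N kU kV : ℕ)
    (QU : Matrix (Fin N) (Fin kU) ℂ) (QV : Matrix (Fin N) (Fin kV) ℂ)
    (hU : QUᴴ * QU = 1) (hV : QVᴴ * QV = 1) :
    frobNorm (QVᴴ * QU) ^ 2 = (kV : ℝ) ↔
      Submodule.span ℂ (Set.range QVᵀ) ≤ Submodule.span ℂ (Set.range QUᵀ) := by
  have hkV : (kV : ℝ) = ∑ i, ∑ n, ‖QVᵀ i n‖ ^ 2 := by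
    simp only [sum_norm_sq_transpose_eq_one hV, Finset.sum_const, Finset.card_univ,
      Fintype.card_fin, nsmul_eq_mul, mul_one]
  rw [frobNorm_conjTranspose_mul_sq, hkV, sum_sum_norm_sq_conjTranspose_mulVec_eq_iff hU QVᵀ,
    Submodule.span_le]
  exact Set.range_subset_iff.symm

/-- **Vanishing of the subspace loss characterizes inclusion of subspaces.**
For `Q_U ∈ ℂ^{N×k_U}` and `Q_V ∈ ℂ^{N×k_V}` with orthonormal columns and
`k_V ≤ k_U ≤ N`, one has `‖Q_Vᴴ Q_U‖_F² = k_V` (equivalently, the subspace loss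
`L₁(Q_U, Q_V) = k_V − ‖Q_Vᴴ Q_U‖_F²` vanishes) if and only if the column span of `Q_V`
is contained in the column span of `Q_U`. -/
theorem subspace_loss_eq_zero_iff_span_le (N kU kV : ℕ) (hVU : kV ≤ kU) (hUN : kU ≤ N)
    (QU : Matrix (Fin N) (Fin kU) ℂ) (QV : Matrix (Fin N) (Fin kV) ℂ)
    (hU : QUᴴ * QU = 1) (hV : QVᴴ * QV = 1) :
    frobNorm (QVᴴ * QU) ^ 2 = (kV : ℝ) ↔
      Submodule.span ℂ (Set.range QVᵀ) ≤ Submodule.span ℂ (Set.range QUᵀ) :=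
  subspace_loss_eq_zero_iff_span_le_general N kU kV QU QV hU hV
end

section
/- Let A, B, M₁, M₂ be n × n complex matrices, let c ∈ ℂ and r > 0, and let Γ be the circle of radius r centered at c. Assume that for every z on Γ both matrices B z − A − M₁ and B z − A − M₂ are invertible, and let R₁ = sup_{z ∈ Γ} ‖(Bz − A − M₁)⁻¹‖ and R₂ = sup_{z ∈ Γ} ‖(Bz − A − M₂)⁻¹‖ (both finite). Define the Riesz projections P_i = (1/(2πi)) ∮_Γ (Bz − A − M_i)⁻¹ B dz for i = 1, 2. Then ‖P₁ − P₂‖ ≤ r · R₁ · R₂ · ‖M₁ − M₂‖ · ‖B‖. -/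
open Matrix MeasureTheory

attribute [local instance] Matrix.normedAddCommGroup Matrix.normedSpace

/-- The spectral (operator) norm of a complex matrix, induced by the Euclidean
vector norm. -/
noncomputable def specNorm {m n : Type*} [Fintype m] [Fintype n] [DecidableEq n]
    (A : Matrix m n ℂ) : ℝ :=
  ‖LinearMap.toContinuousLinearMap (Matrix.toEuclideanLin A)‖

/-- The Riesz projection `(1/(2πi)) ∮_Γ (Bz − A − M)⁻¹ B dz` over the circle `Γ` of
radius `r` centered at `c`, parametrized as `z = c + r e^{iθ}`, `θ ∈ [0, 2π]`. -/
noncomputable def rieszProj (n : ℕ) (A B M : Matrix (Fin n) (Fin n) ℂ) (c : ℂ) (r : ℝ) :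
    Matrix (Fin n) (Fin n) ℂ :=
  (2 * Real.pi * Complex.I)⁻¹ •
    ∫ θ in (0:ℝ)..(2 * Real.pi),
      (Complex.I * (r : ℂ) * Complex.exp (θ * Complex.I)) •
        (((c + (r : ℂ) * Complex.exp (θ * Complex.I)) • B - A - M)⁻¹ * B)

/-!
By the second resolvent identity the two integrands differ by
`(zB − A − M₁)⁻¹ (M₁ − M₂) (zB − A − M₂)⁻¹ B`, whose spectral norm is at most
`R₁ ‖M₁ − M₂‖ R₂ ‖B‖` on `Γ`. Estimating the contour integral by `|Γ| = 2πr` times this bound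
and dividing by `|2πi|` gives the claim.
-/

section SpecNorm

variable {ι : Type*} [Fintype ι] [DecidableEq ι]

theorem specNorm_eq_norm_toEuclideanCLM (X : Matrix ι ι ℂ) :
    specNorm X = ‖Matrix.toEuclideanCLM (𝕜 := ℂ) X‖ :=
  rfl

theorem specNorm_nonneg (X : Matrix ι ι ℂ) : 0 ≤ specNorm X :=
  norm_nonneg _

theorem specNorm_smul (a : ℂ) (X : Matrix ι ι ℂ) : specNorm (a • X) = ‖a‖ * specNorm X := by
  simp only [specNorm_eq_norm_toEuclideanCLM, map_smul, norm_smul]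

theorem specNorm_mul_le (X Y : Matrix ι ι ℂ) : specNorm (X * Y) ≤ specNorm X * specNorm Y := by
  simp only [specNorm_eq_norm_toEuclideanCLM, map_mul]
  exact norm_mul_le _ _

theorem specNorm_mul_le_of_le {X Y : Matrix ι ι ℂ} {a b : ℝ} (hX : specNorm X ≤ a)
    (hY : specNorm Y ≤ b) : specNorm (X * Y) ≤ a * b :=
  (specNorm_mul_le X Y).trans
    (mul_le_mul hX hY (specNorm_nonneg Y) ((specNorm_nonneg X).trans hX))

/-- `Matrix.toEuclideanCLM` as a continuous linear map for the entrywise norm on matrices, in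
which the contour integrals are taken; it carries them to operator-valued integrals. -/
noncomputable def toEuclideanCLMₗ :
    Matrix ι ι ℂ →L[ℂ] (EuclideanSpace ℂ ι →L[ℂ] EuclideanSpace ℂ ι) :=
  LinearMap.toContinuousLinearMap (Matrix.toEuclideanCLM (𝕜 := ℂ)).toAlgEquiv.toLinearMap

theorem toEuclideanCLMₗ_apply (X : Matrix ι ι ℂ) :
    toEuclideanCLMₗ X = Matrix.toEuclideanCLM (𝕜 := ℂ) X :=
  rfl

theorem continuous_specNorm : Continuous (specNorm : Matrix ι ι ℂ → ℝ) := by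
  simp only [funext specNorm_eq_norm_toEuclideanCLM]
  exact (toEuclideanCLMₗ (ι := ι)).continuous.norm

theorem specNorm_circleIntegral_le {f : ℂ → Matrix ι ι ℂ} {c : ℂ} {R C : ℝ} (hR : 0 ≤ R)
    (hf : CircleIntegrable f c R) (hC : ∀ z ∈ Metric.sphere c R, specNorm (f z) ≤ C) :
    specNorm (∮ z in C(c, R), f z) ≤ 2 * Real.pi * R * C := by
  have hcomm : Matrix.toEuclideanCLM (𝕜 := ℂ) (∮ z in C(c, R), f z) =
      ∮ z in C(c, R), Matrix.toEuclideanCLM (𝕜 := ℂ) (f z) := by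
    simp only [circleIntegral]
    rw [← toEuclideanCLMₗ_apply]
    refine ((toEuclideanCLMₗ (ι := ι)).intervalIntegral_comp_comm hf.out).symm.trans ?_
    exact intervalIntegral.integral_congr fun θ _ => toEuclideanCLMₗ.map_smul _ _
  rw [specNorm_eq_norm_toEuclideanCLM, hcomm]
  exact circleIntegral.norm_integral_le_of_norm_le_const hR fun z hz =>
    specNorm_eq_norm_toEuclideanCLM (f z) ▸ hC z hz

end SpecNorm

theorem Matrix.inv_sub_inv_of_isUnit {ι R : Type*} [Fintype ι] [DecidableEq ι] [CommRing R]
    {X Y : Matrix ι ι R} (hX : IsUnit X) (hY : IsUnit Y) :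
    X⁻¹ - Y⁻¹ = X⁻¹ * (Y - X) * Y⁻¹ := by
  simp only [Matrix.nonsing_inv_eq_ringInverse]
  exact Ring.inverse_sub_inverse (iff_of_true hX hY)

theorem ContinuousOn.matrix_inv {ι 𝕜 X : Type*} [Fintype ι] [DecidableEq ι] [NormedField 𝕜]
    [TopologicalSpace X] {F : X → Matrix ι ι 𝕜} {s : Set X} (hF : ContinuousOn F s)
    (hu : ∀ x ∈ s, IsUnit (F x)) : ContinuousOn (fun x => (F x)⁻¹) s := fun x hx =>
  have hdet : ContinuousAt Ring.inverse (F x).det := by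
    rw [Ring.inverse_eq_inv']
    exact continuousAt_inv₀ ((Matrix.isUnit_iff_isUnit_det _).mp (hu x hx)).ne_zero
  (continuousAt_matrix_inv _ hdet).comp_continuousWithinAt (hF x hx)

section Pencil

variable {n : ℕ} {A B M M₁ M₂ : Matrix (Fin n) (Fin n) ℂ} {c : ℂ} {r : ℝ}

theorem continuousOn_pencil_inv (hM : ∀ z ∈ Metric.sphere c r, IsUnit (z • B - A - M)) :
    ContinuousOn (fun z : ℂ => (z • B - A - M)⁻¹) (Metric.sphere c r) :=
  ContinuousOn.matrix_inv (by fun_prop) hM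

theorem specNorm_pencil_inv_le_sSup (hM : ∀ z ∈ Metric.sphere c r, IsUnit (z • B - A - M))
    {z : ℂ} (hz : z ∈ Metric.sphere c r) :
    specNorm ((z • B - A - M)⁻¹) ≤
      sSup ((fun z => specNorm ((z • B - A - M)⁻¹)) '' Metric.sphere c r) :=
  le_csSup ((isCompact_sphere c r).bddAbove_image
    (continuous_specNorm.comp_continuousOn (continuousOn_pencil_inv hM)))
    (Set.mem_image_of_mem _ hz)

theorem rieszProj_eq_circleIntegral (A B M : Matrix (Fin n) (Fin n) ℂ) (c : ℂ) (r : ℝ) :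
    rieszProj n A B M c r =
      (2 * Real.pi * Complex.I)⁻¹ • ∮ z in C(c, r), (z • B - A - M)⁻¹ * B := by
  rw [rieszProj, circleIntegral]
  congr 1
  refine intervalIntegral.integral_congr fun θ _ => ?_
  simp only [deriv_circleMap, circleMap, zero_add]
  congr 1
  ring

theorem rieszProj_sub_rieszProj (hr : 0 ≤ r)
    (h₁ : ∀ z ∈ Metric.sphere c r, IsUnit (z • B - A - M₁))
    (h₂ : ∀ z ∈ Metric.sphere c r, IsUnit (z • B - A - M₂)) :
    rieszProj n A B M₁ c r - rieszProj n A B M₂ c r =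
      (2 * Real.pi * Complex.I)⁻¹ •
        ∮ z in C(c, r), (z • B - A - M₁)⁻¹ * (M₁ - M₂) * (z • B - A - M₂)⁻¹ * B := by
  have hint : ∀ M : Matrix (Fin n) (Fin n) ℂ, (∀ z ∈ Metric.sphere c r, IsUnit (z • B - A - M)) →
      CircleIntegrable (fun z => (z • B - A - M)⁻¹ * B) c r := fun M hM =>
    ((continuousOn_pencil_inv hM).mul continuousOn_const).circleIntegrable hr
  rw [rieszProj_eq_circleIntegral, rieszProj_eq_circleIntegral, ← smul_sub,
    ← circleIntegral.integral_sub (hint M₁ h₁) (hint M₂ h₂)]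
  congr 1
  refine circleIntegral.integral_congr hr fun z hz => ?_
  have hdiff : (z • B - A - M₂) - (z • B - A - M₁) = M₁ - M₂ := by abel
  simp only [← sub_mul, Matrix.inv_sub_inv_of_isUnit (h₁ z hz) (h₂ z hz), hdiff]

end Pencil

/-- **Stability of Riesz projections (first-order bound).**
Let `A, B, M₁, M₂` be `n × n` complex matrices and `Γ` the circle of radius `r > 0`
centered at `c`. Assume `Bz − A − Mᵢ` is invertible for every `z ∈ Γ`, and let
`Rᵢ = sup_{z ∈ Γ} ‖(Bz − A − Mᵢ)⁻¹‖` (spectral norm). Then the Riesz projections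
`Pᵢ = (1/(2πi)) ∮_Γ (Bz − A − Mᵢ)⁻¹ B dz` satisfy
`‖P₁ − P₂‖ ≤ r · R₁ · R₂ · ‖M₁ − M₂‖ · ‖B‖`. -/
theorem riesz_projection_difference_bound (n : ℕ)
    (A B M₁ M₂ : Matrix (Fin n) (Fin n) ℂ) (c : ℂ) (r : ℝ) (hr : 0 < r)
    (h₁ : ∀ z ∈ Metric.sphere c r, IsUnit (z • B - A - M₁))
    (h₂ : ∀ z ∈ Metric.sphere c r, IsUnit (z • B - A - M₂))
    (R₁ R₂ : ℝ)
    (hR₁ : R₁ = sSup ((fun z => specNorm ((z • B - A - M₁)⁻¹)) '' Metric.sphere c r))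
    (hR₂ : R₂ = sSup ((fun z => specNorm ((z • B - A - M₂)⁻¹)) '' Metric.sphere c r)) :
    specNorm (rieszProj n A B M₁ c r - rieszProj n A B M₂ c r) ≤
      r * R₁ * R₂ * specNorm (M₁ - M₂) * specNorm B := by
  have hbound : ∀ z ∈ Metric.sphere c r,
      specNorm ((z • B - A - M₁)⁻¹ * (M₁ - M₂) * (z • B - A - M₂)⁻¹ * B) ≤
        R₁ * specNorm (M₁ - M₂) * R₂ * specNorm B := fun z hz =>
    specNorm_mul_le_of_le (specNorm_mul_le_of_le (specNorm_mul_le_of_le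
      (hR₁ ▸ specNorm_pencil_inv_le_sSup h₁ hz) le_rfl)
      (hR₂ ▸ specNorm_pencil_inv_le_sSup h₂ hz)) le_rfl
  have hint : CircleIntegrable
      (fun z => (z • B - A - M₁)⁻¹ * (M₁ - M₂) * (z • B - A - M₂)⁻¹ * B) c r :=
    ((((continuousOn_pencil_inv h₁).mul continuousOn_const).mul
      (continuousOn_pencil_inv h₂)).mul continuousOn_const).circleIntegrable hr.le
  rw [rieszProj_sub_rieszProj hr.le h₁ h₂, specNorm_smul]
  calc _ ≤ ‖(2 * Real.pi * Complex.I)⁻¹‖ *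
        (2 * Real.pi * r * (R₁ * specNorm (M₁ - M₂) * R₂ * specNorm B)) := by
        gcongr
        exact specNorm_circleIntegral_le hr.le hint hbound
    _ = r * R₁ * R₂ * specNorm (M₁ - M₂) * specNorm B := by
        simp only [norm_inv, norm_mul, Complex.norm_ofNat, Complex.norm_real, Complex.norm_I,
          Real.norm_eq_abs, abs_of_pos Real.pi_pos, mul_one]
        field_simp
end

section
/- Let A, B be n × n complex matrices, let U, V be n × K complex matrices with orthonormal columns, and suppose ‖U − V‖ ≤ √2 · s for some real s ≥ 0. Set E = U* A U − V* A V and F = U* B U − V* B V. Then √(‖E‖² + ‖F‖²) ≤ 2√2 · s · √(‖A‖² + ‖B‖²). -/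
open Matrix

open scoped Matrix.Norms.L2Operator

lemma specNorm_eq_l2 {m n : Type*} [Fintype m] [Fintype n] [DecidableEq n]
    (A : Matrix m n ℂ) : specNorm A = ‖A‖ := rfl

lemma norm_one_le_one (K : ℕ) : ‖(1 : Matrix (Fin K) (Fin K) ℂ)‖ ≤ 1 := by
  rw [Matrix.l2_opNorm_def]
  refine ContinuousLinearMap.opNorm_le_bound _ zero_le_one fun x => ?_
  simp [Matrix.toEuclideanLin]

lemma norm_le_one_of_orthonormal {n K : ℕ} (U : Matrix (Fin n) (Fin K) ℂ)
    (hU : Uᴴ * U = 1) : ‖U‖ ≤ 1 := by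
  have h2 : ‖U‖ * ‖U‖ ≤ 1 := by
    rw [← Matrix.l2_opNorm_conjTranspose_mul_self, hU]; exact norm_one_le_one K
  nlinarith [norm_nonneg U]

lemma compression_diff_le {n K : ℕ} (M : Matrix (Fin n) (Fin n) ℂ)
    (U V : Matrix (Fin n) (Fin K) ℂ) (hU : Uᴴ * U = 1) (hV : Vᴴ * V = 1)
    (s : ℝ) (hUV : ‖U - V‖ ≤ Real.sqrt 2 * s) :
    ‖Uᴴ * M * U - Vᴴ * M * V‖ ≤ 2 * Real.sqrt 2 * s * ‖M‖ := by
  have hid : Uᴴ * M * U - Vᴴ * M * V = Uᴴ * M * (U - V) + (U - V)ᴴ * M * V := by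
    rw [Matrix.conjTranspose_sub, Matrix.mul_sub, Matrix.sub_mul, Matrix.sub_mul]; abel
  have hUn := norm_le_one_of_orthonormal U hU
  have hVn := norm_le_one_of_orthonormal V hV
  have hUVn : (0:ℝ) ≤ ‖U - V‖ := norm_nonneg _
  have hMn : (0:ℝ) ≤ ‖M‖ := norm_nonneg _
  have h1 : ‖Uᴴ * M * (U - V)‖ ≤ ‖U - V‖ * ‖M‖ := by
    calc ‖Uᴴ * M * (U - V)‖ ≤ ‖Uᴴ * M‖ * ‖U - V‖ := Matrix.l2_opNorm_mul _ _
      _ ≤ ‖Uᴴ‖ * ‖M‖ * ‖U - V‖ :=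
          mul_le_mul_of_nonneg_right (Matrix.l2_opNorm_mul _ _) hUVn
      _ ≤ ‖U - V‖ * ‖M‖ := by
          rw [Matrix.l2_opNorm_conjTranspose]
          nlinarith [mul_nonneg hMn hUVn]
  have h2 : ‖(U - V)ᴴ * M * V‖ ≤ ‖U - V‖ * ‖M‖ := by
    calc ‖(U - V)ᴴ * M * V‖ ≤ ‖(U - V)ᴴ * M‖ * ‖V‖ := Matrix.l2_opNorm_mul _ _
      _ ≤ ‖(U - V)ᴴ‖ * ‖M‖ * ‖V‖ :=
          mul_le_mul_of_nonneg_right (Matrix.l2_opNorm_mul _ _) (norm_nonneg V)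
      _ ≤ ‖U - V‖ * ‖M‖ := by
          rw [Matrix.l2_opNorm_conjTranspose]
          nlinarith [mul_nonneg hUVn hMn]
  calc ‖Uᴴ * M * U - Vᴴ * M * V‖ ≤ ‖Uᴴ * M * (U - V)‖ + ‖(U - V)ᴴ * M * V‖ := by
        rw [hid]; exact norm_add_le _ _
    _ ≤ 2 * (‖U - V‖ * ‖M‖) := by linarith
    _ ≤ 2 * Real.sqrt 2 * s * ‖M‖ := by nlinarith

/-- **Joint projection error bound for a matrix pencil.**
Let `A, B` be `n × n` complex matrices, `U, V ∈ ℂ^{n×K}` have orthonormal columns, and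
suppose `‖U − V‖ ≤ √2 · s` for some `s ≥ 0` (spectral norm). With
`E = Uᴴ A U − Vᴴ A V` and `F = Uᴴ B U − Vᴴ B V`, one has
`√(‖E‖² + ‖F‖²) ≤ 2√2 · s · √(‖A‖² + ‖B‖²)`. -/
theorem pencil_compression_difference_bound (n K : ℕ)
    (A B : Matrix (Fin n) (Fin n) ℂ)
    (U V : Matrix (Fin n) (Fin K) ℂ) (hU : Uᴴ * U = 1) (hV : Vᴴ * V = 1)
    (s : ℝ) (hs : 0 ≤ s) (hUV : specNorm (U - V) ≤ Real.sqrt 2 * s) :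
    Real.sqrt (specNorm (Uᴴ * A * U - Vᴴ * A * V) ^ 2 +
        specNorm (Uᴴ * B * U - Vᴴ * B * V) ^ 2) ≤
      2 * Real.sqrt 2 * s * Real.sqrt (specNorm A ^ 2 + specNorm B ^ 2) := by
  simp only [specNorm_eq_l2] at *
  set c : ℝ := 2 * Real.sqrt 2 * s with hc
  have hc0 : 0 ≤ c := by positivity
  have hA := compression_diff_le A U V hU hV s hUV
  have hB := compression_diff_le B U V hU hV s hUV
  have hEA : ‖Uᴴ * A * U - Vᴴ * A * V‖ ^ 2 ≤ c ^ 2 * ‖A‖ ^ 2 := by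
    have h := pow_le_pow_left₀ (norm_nonneg _) hA 2
    calc ‖Uᴴ * A * U - Vᴴ * A * V‖ ^ 2 ≤ (2 * Real.sqrt 2 * s * ‖A‖) ^ 2 := h
      _ = c ^ 2 * ‖A‖ ^ 2 := by rw [hc]; ring
  have hEB : ‖Uᴴ * B * U - Vᴴ * B * V‖ ^ 2 ≤ c ^ 2 * ‖B‖ ^ 2 := by
    have h := pow_le_pow_left₀ (norm_nonneg _) hB 2
    calc ‖Uᴴ * B * U - Vᴴ * B * V‖ ^ 2 ≤ (2 * Real.sqrt 2 * s * ‖B‖) ^ 2 := h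
      _ = c ^ 2 * ‖B‖ ^ 2 := by rw [hc]; ring
  calc Real.sqrt (‖Uᴴ * A * U - Vᴴ * A * V‖ ^ 2 + ‖Uᴴ * B * U - Vᴴ * B * V‖ ^ 2)
      ≤ Real.sqrt (c ^ 2 * (‖A‖ ^ 2 + ‖B‖ ^ 2)) := by
        apply Real.sqrt_le_sqrt; nlinarith
    _ = c * Real.sqrt (‖A‖ ^ 2 + ‖B‖ ^ 2) := by
        rw [Real.sqrt_mul (by positivity), Real.sqrt_sq hc0]
end
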